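/- arXiv:2411.08259 — 3 statements merged into one kernel-verified Lean document; each statement's English description precedes it below -/
import Mathlib

section
/- Let Q be a profinite group and let Π₁, ..., Πₙ be open normal subgroups of Q whose product Π₁ × ... × Πₙ embeds as an open subgroup of Q, with each Πᵢ having open Frattini subgroup. Then Q has open Frattini subgroup, i.e., the intersection of all maximal proper open subgroups of Q is open. -/
/-! Let `U ≤ Q` be open and `N ⊆ Φ(U)` an open normal subgroup of `Q`. If a maximal closed
subgroup `M` of `Q` missed `N`, then `M N = Q` (a product of compact sets, hence a closed
subgroup), so `(M ∩ U) N = U`. Elements of `Φ(U)` are non-generators, because every proper closed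
subgroup of a profinite group lies in a maximal one; hence `M ∩ U = U`, contradicting `N ⊄ M`.
So `N ≤ Φ(Q)`. The same argument, applied to the embeddings of the factors `Πᵢ` into the
product, shows that `Φ(Π₁ × ⋯ × Πₙ)` contains a product of open normal subgroups of the `Φ(Πᵢ)`. -/

/-- The (topological) Frattini subgroup of a topological group: the intersection of
all maximal proper closed subgroups (equal to the whole group if there are none). -/
def closedFrattini (Q : Type*) [Group Q] [TopologicalSpace Q] : Subgroup Q :=
  sInf {M : Subgroup Q | IsClosed (M : Set Q) ∧ M ≠ ⊤ ∧
    ∀ N : Subgroup Q, IsClosed (N : Set Q) → M < N → N = ⊤}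

open scoped Pointwise
open Topology

namespace Subgroup

section Maximal

variable {G : Type*} [Group G] [TopologicalSpace G]

def IsMaximalClosed (M : Subgroup G) : Prop :=
  IsClosed (M : Set G) ∧ M ≠ ⊤ ∧ ∀ N : Subgroup G, IsClosed (N : Set G) → M < N → N = ⊤

theorem le_closedFrattini_iff {H : Subgroup G} :
    H ≤ closedFrattini G ↔ ∀ M : Subgroup G, M.IsMaximalClosed → H ≤ M :=
  le_sInf_iff

end Maximal

theorem Normal.map_mulSingle {ι : Type*} [DecidableEq ι] {P : ι → Type*} [∀ i, Group (P i)]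
    {i : ι} {W : Subgroup (P i)} (hW : W.Normal) : (W.map (MonoidHom.mulSingle P i)).Normal := by
  constructor
  rintro _ ⟨w, hw, rfl⟩ g
  refine ⟨g i * w * (g i)⁻¹, hW.conj_mem w hw (g i), funext fun j => ?_⟩
  by_cases h : j = i
  · subst h; simp
  · simp [h]

theorem isClosed_sup_of_normal {G : Type*} [Group G] [TopologicalSpace G] [ContinuousMul G]
    [T2Space G] {M N : Subgroup G} [N.Normal] (hM : IsCompact (M : Set G))
    (hN : IsCompact (N : Set G)) : IsClosed ((M ⊔ N : Subgroup G) : Set G) := by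
  rw [mul_normal]
  exact (hM.mul hN).isClosed

section Profinite

variable {G : Type*} [Group G] [TopologicalSpace G] [IsTopologicalGroup G] [CompactSpace G]
  [TotallyDisconnectedSpace G]

theorem exists_isOpen_ne_top_le {D : Subgroup G} (hD : IsClosed (D : Set G)) (hne : D ≠ ⊤) :
    ∃ V : Subgroup G, IsOpen (V : Set G) ∧ V ≠ ⊤ ∧ D ≤ V := by
  by_contra! h
  refine hne (eq_top_iff.mpr ?_)
  rw [show D = _ from ProfiniteGrp.closedSubgroup_eq_sInf_open ⟨D, hD⟩]
  exact le_sInf fun V ⟨hV, hDV⟩ => top_le_iff.mpr (not_not.mp fun hVne => h V hV hVne hDV)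

theorem exists_isMaximalClosed_le {D : Subgroup G} (hD : IsClosed (D : Set G)) (hne : D ≠ ⊤) :
    ∃ M : Subgroup G, M.IsMaximalClosed ∧ D ≤ M := by
  obtain ⟨V, hVo, hVne, hDV⟩ := exists_isOpen_ne_top_le hD hne
  obtain ⟨N, hNV⟩ := ProfiniteGrp.exist_openNormalSubgroup_sub_open_nhds_of_one hVo V.one_mem
  have : Finite (G ⧸ N.toSubgroup) := quotient_finite_of_isOpen _ N.isOpen
  have hfin : {K : Subgroup G | N.toSubgroup ≤ K}.Finite :=
    Set.finite_coe_iff.mp (Finite.of_equiv _ (QuotientGroup.comapMk'OrderIso _).toEquiv)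
  obtain ⟨M, hVM, hM⟩ := (hfin.subset (t := {K | V ≤ K ∧ K ≠ ⊤})
    fun K hK _ hx => hK.1 (hNV hx)).exists_le_maximal ⟨le_rfl, hVne⟩
  refine ⟨M, ⟨M.isClosed_of_isOpen (isOpen_mono hVM hVo), hM.prop.2, fun K _ hMK => ?_⟩,
    hDV.trans hVM⟩
  by_contra hK
  exact hMK.not_ge (hM.le_of_ge ⟨hM.prop.1.trans hMK.le, hK⟩ hMK.le)

theorem eq_top_of_sup_eq_top_of_le_closedFrattini {D W : Subgroup G} (hD : IsClosed (D : Set G))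
    (hW : W ≤ closedFrattini G) (h : D ⊔ W = ⊤) : D = ⊤ := by
  by_contra hne
  obtain ⟨M, hM, hDM⟩ := exists_isMaximalClosed_le hD hne
  exact hM.2.1 (top_unique (h ▸ sup_le hDM (hW.trans (le_closedFrattini_iff.mp le_rfl M hM))))

end Profinite

theorem map_le_closedFrattini {H G : Type*} [Group H] [TopologicalSpace H]
    [IsTopologicalGroup H] [CompactSpace H] [TotallyDisconnectedSpace H] [Group G]
    [TopologicalSpace G] [ContinuousMul G] [CompactSpace G] [T2Space G] {φ : H →* G}
    (hφ : Continuous φ) {W : Subgroup H} (hWc : IsClosed (W : Set H))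
    (hW : W ≤ closedFrattini H) (hn : (W.map φ).Normal) : W.map φ ≤ closedFrattini G := by
  refine le_closedFrattini_iff.mpr fun M hM => ?_
  by_contra hWM
  have hWc' : IsCompact ((W.map φ : Subgroup G) : Set G) := hWc.isCompact.image hφ
  have hsup : M ⊔ W.map φ = ⊤ :=
    hM.2.2 _ (isClosed_sup_of_normal hM.1.isCompact hWc') (left_lt_sup.mpr hWM)
  have hcomap : M.comap φ ⊔ W = ⊤ := by
    refine eq_top_iff.mpr fun a _ => ?_
    obtain ⟨m, hm, _, ⟨w, hw, rfl⟩, hmw⟩ : φ a ∈ (M : Set G) * (W.map φ : Subgroup G) := by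
      rw [← mul_normal, hsup]; trivial
    have haw : a * w⁻¹ ∈ M.comap φ := by simpa [← hmw] using hm
    simpa using mul_mem_sup haw hw
  have hcomap_top := eq_top_of_sup_eq_top_of_le_closedFrattini (hM.1.preimage hφ) hW hcomap
  exact hWM (map_le_iff_le_comap.mpr (hcomap_top ▸ le_top))

end Subgroup

theorem isOpen_closedFrattini_pi {ι : Type*} [Finite ι] {P : ι → Type*}
    [∀ i, Group (P i)] [∀ i, TopologicalSpace (P i)] [∀ i, IsTopologicalGroup (P i)]
    [∀ i, CompactSpace (P i)] [∀ i, TotallyDisconnectedSpace (P i)] [∀ i, T2Space (P i)]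
    (h : ∀ i, IsOpen (closedFrattini (P i) : Set (P i))) :
    IsOpen (closedFrattini (∀ i, P i) : Set (∀ i, P i)) := by
  classical
  choose W hW using fun i =>
    ProfiniteGrp.exist_openNormalSubgroup_sub_open_nhds_of_one (h i) (one_mem _)
  have hle : Subgroup.pi Set.univ (fun i => (W i).toSubgroup) ≤ closedFrattini (∀ i, P i) :=
    Subgroup.pi_le_iff.mpr fun i => Subgroup.map_le_closedFrattini (continuous_mulSingle i)
      (W i).isClosed (fun _ hx => hW i hx) (W i).isNormal'.map_mulSingle
  refine Subgroup.isOpen_mono hle ?_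
  rw [Subgroup.coe_pi]
  exact isOpen_set_pi Set.finite_univ fun i _ => (W i).isOpen

theorem isOpen_closedFrattini_of_isOpenEmbedding {H G : Type*} [Group H] [TopologicalSpace H]
    [IsTopologicalGroup H] [CompactSpace H] [TotallyDisconnectedSpace H] [Group G]
    [TopologicalSpace G] [IsTopologicalGroup G] [CompactSpace G] [TotallyDisconnectedSpace G]
    [T2Space G] {φ : H →* G} (hφ : IsOpenEmbedding φ)
    (hH : IsOpen (closedFrattini H : Set H)) : IsOpen (closedFrattini G : Set G) := by
  obtain ⟨N, hN⟩ := ProfiniteGrp.exist_openNormalSubgroup_sub_open_nhds_of_one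
    (hφ.isOpenMap _ hH) ⟨1, one_mem _, map_one φ⟩
  have hmap : (N.toSubgroup.comap φ).map φ = N := by
    rw [Subgroup.map_comap_eq, inf_eq_right]
    exact fun x hx => Set.image_subset_range _ _ (hN hx)
  have hle : N.toSubgroup.comap φ ≤ closedFrattini H := fun a ha => by
    obtain ⟨b, hb, hba⟩ := hN ha
    exact hφ.injective hba ▸ hb
  have hNΦ := Subgroup.map_le_closedFrattini hφ.continuous (N.isClosed.preimage hφ.continuous) hle
    (by rw [hmap]; exact N.isNormal')
  exact Subgroup.isOpen_mono (hmap ▸ hNΦ) N.isOpen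

/-- If a profinite group `Q` has an open subgroup which is isomorphic, as a topological
group, to a finite product `Π₁ × ⋯ × Πₙ` of profinite groups each having open Frattini
subgroup, then the Frattini subgroup of `Q` is open. -/
theorem frattini_isOpen_of_open_product
    {Q : Type*} [Group Q] [TopologicalSpace Q] [IsTopologicalGroup Q]
    [CompactSpace Q] [TotallyDisconnectedSpace Q] [T2Space Q]
    {ι : Type*} [Fintype ι] (P : ι → Type*)
    [∀ i, Group (P i)] [∀ i, TopologicalSpace (P i)] [∀ i, IsTopologicalGroup (P i)]
    [∀ i, CompactSpace (P i)] [∀ i, TotallyDisconnectedSpace (P i)] [∀ i, T2Space (P i)]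
    (U : Subgroup Q) (hU : IsOpen (U : Set Q))
    (e : U ≃* ((i : ι) → P i)) (he : Continuous e) (he' : Continuous e.symm)
    (hfr : ∀ i, IsOpen ((closedFrattini (P i) : Subgroup (P i)) : Set (P i))) :
    IsOpen ((closedFrattini Q : Subgroup Q) : Set Q) := by
  let e' : ((i : ι) → P i) ≃ₜ U := ⟨e.symm.toEquiv, he', he⟩
  exact isOpen_closedFrattini_of_isOpenEmbedding (φ := U.subtype.comp e.symm.toMonoidHom)
    (hU.isOpenEmbedding_subtypeVal.comp e'.isOpenEmbedding) (isOpen_closedFrattini_pi hfr)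
end

section
/- Let E ⊆ F₁, ..., Fₙ and F be number fields (or more abstractly, finite Galois extensions of Q inside a fixed algebraic closure) with F the compositum of F₁,...,Fₙ, all Fᵢ Galois over Q containing E, and the Fᵢ linearly disjoint over E, so that [F:Q] = [E:Q]·∏ᵢ[Fᵢ:E]. Fix a conjugacy class C of Gal(E|Q) and for each i a nonempty conjugacy class Cᵢ of Gal(Fᵢ|Q) restricting into C. Then the number of σ ∈ Gal(F|Q) with σ|_E ∈ C but σ|_{Fᵢ} ∉ Cᵢ for every i is at most |C|·∏ᵢ([Fᵢ:E] − 1). -/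
/-!
Fix for every `τ ∈ C` and every `i` a lift `sᵢ(τ) ∈ Cᵢ` of `τ` to `Gal(Fᵢ|ℚ)`. A counted `σ` is
determined by `τ = σ|_E` together with the elements `σ|_{Fᵢ} · sᵢ(τ)⁻¹` of `ker(Gal(Fᵢ|ℚ) → Gal(E|ℚ))`,
none of which is `1` because `σ|_{Fᵢ} ∉ Cᵢ`. This injects the counted set into
`C × ∏ᵢ (ker \ {1})`.
-/

open IntermediateField

theorem Nat.card_subtype_ne {α : Type*} [Finite α] (a : α) :
    Nat.card {x : α // x ≠ a} = Nat.card α - 1 := by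
  classical
  have := Fintype.ofFinite α
  simp only [Nat.card_eq_fintype_card, ne_eq]
  rw [Fintype.card_subtype_compl, Fintype.card_subtype_eq]

theorem card_avoiding_le {G K ι : Type*} {H : ι → Type*} [Group K] [∀ i, Group (H i)]
    [Fintype ι] (q : ∀ i, G → H i) (p : ∀ i, H i →* K)
    [∀ i, Finite (p i).ker] (r : G → K)
    (hpq : ∀ i σ, p i (q i σ) = r σ) (hq : Function.Injective fun σ i => q i σ)
    (C : Set K) (hC : C.Finite) (D : ∀ i, Set (H i)) (hD : ∀ i, ∀ τ ∈ C, ∃ x ∈ D i, p i x = τ) :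
    Nat.card {σ : G // r σ ∈ C ∧ ∀ i, q i σ ∉ D i}
      ≤ C.ncard * ∏ i, (Nat.card (p i).ker - 1) := by
  have := hC.to_subtype
  choose s hsD hsp using fun i (τ : C) => hD i τ τ.2
  have mem_ker (σ : G) (hσ : r σ ∈ C) (i : ι) : q i σ * (s i ⟨r σ, hσ⟩)⁻¹ ∈ (p i).ker := by
    rw [MonoidHom.mem_ker, map_mul, map_inv, hpq, hsp, mul_inv_cancel]
  let f : {σ : G // r σ ∈ C ∧ ∀ i, q i σ ∉ D i} → C × ∀ i, {k : (p i).ker // k ≠ 1} :=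
    fun σ => (⟨r σ, σ.2.1⟩, fun i => ⟨⟨_, mem_ker σ σ.2.1 i⟩, fun h => σ.2.2 i <| by
      rw [mul_inv_eq_one.mp (congrArg Subtype.val h)]
      exact hsD i _⟩)
  have hf : Function.Injective f := by
    rintro ⟨σ, hσ⟩ ⟨σ', hσ'⟩ h
    simp only [f, Prod.mk.injEq, Subtype.mk.injEq, funext_iff] at h
    obtain ⟨hr, hk⟩ := h
    refine Subtype.ext (hq (funext fun i => mul_right_cancel ((hk i).trans ?_)))
    rw [show s i ⟨r σ, hσ.1⟩ = s i ⟨r σ', hσ'.1⟩ from congrArg (s i) (Subtype.ext hr)]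
  calc Nat.card {σ : G // r σ ∈ C ∧ ∀ i, q i σ ∉ D i}
      ≤ Nat.card (C × ∀ i, {k : (p i).ker // k ≠ 1}) := Nat.card_le_card_of_injective f hf
    _ = C.ncard * ∏ i, (Nat.card (p i).ker - 1) := by
      simp only [Nat.card_prod, Nat.card_pi, Nat.card_subtype_ne, Nat.card_coe_set_eq]

/-- `Gal(E|ℚ)` is formed with the canonical `ℚ`-algebra structure of a field of characteristic
zero, not with the one inherited from `A`; the two agree as `ℚ`-module structures are unique. -/
theorem IntermediateField.finite_algEquiv_rat {A : Type*} [Field A] [Algebra ℚ A]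
    (E : IntermediateField ℚ A) [FiniteDimensional ℚ E] : Finite (E ≃ₐ[ℚ] E) :=
  @Finite.of_fintype _ <| @AlgEquiv.fintype ℚ E _ _ _ <| by
    rwa [Subsingleton.elim Algebra.toModule E.module']

theorem IntermediateField.restrict_restrict {k A : Type*} [Field k] [Field A] [Algebra k A]
    {K L M : IntermediateField k A} (hKL : K ≤ L) (hLM : L ≤ M) (hKM : K ≤ M)
    {σ : M → M} {τ : L → L} {ρ ρ' : K → K}
    (hτ : ∀ x, inclusion hLM (τ x) = σ (inclusion hLM x))
    (hρ : ∀ x, inclusion hKL (ρ x) = τ (inclusion hKL x))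
    (hρ' : ∀ x, inclusion hKM (ρ' x) = σ (inclusion hKM x)) : ρ = ρ' := by
  funext x
  apply Subtype.val_injective
  have h := congrArg Subtype.val (hτ (inclusion hKL x))
  rw [← hρ, show inclusion hLM (inclusion hKL x) = inclusion hKM x from rfl, ← hρ'] at h
  exact h

theorem galois_counting_bound_general
    {A : Type*} [Field A] [Algebra ℚ A]
    {ι : Type*} [Fintype ι]
    (E F : IntermediateField ℚ A) (Fi : ι → IntermediateField ℚ A)
    (hle : ∀ i, E ≤ Fi i) (hleF : ∀ i, Fi i ≤ F) (hEF : E ≤ F)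
    (hfdE : FiniteDimensional ℚ ↥E) (hfd : ∀ i, FiniteDimensional ℚ ↥(Fi i))
    -- the restriction homomorphisms, characterized by compatibility with the inclusions
    (pE : ∀ i, (↥(Fi i) ≃ₐ[ℚ] ↥(Fi i)) →* (↥E ≃ₐ[ℚ] ↥E))
    (hpE : ∀ i (σ : ↥(Fi i) ≃ₐ[ℚ] ↥(Fi i)) (x : ↥E),
      inclusion (hle i) (pE i σ x) = σ (inclusion (hle i) x))
    (q : ∀ i, (↥F ≃ₐ[ℚ] ↥F) →* (↥(Fi i) ≃ₐ[ℚ] ↥(Fi i)))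
    (hq : ∀ i (σ : ↥F ≃ₐ[ℚ] ↥F) (x : ↥(Fi i)),
      inclusion (hleF i) (q i σ x) = σ (inclusion (hleF i) x))
    (rE : (↥F ≃ₐ[ℚ] ↥F) →* (↥E ≃ₐ[ℚ] ↥E))
    (hrE : ∀ (σ : ↥F ≃ₐ[ℚ] ↥F) (x : ↥E),
      inclusion hEF (rE σ x) = σ (inclusion hEF x))
    -- linear disjointness of the `Fᵢ` over `E`
    (hinj : Function.Injective fun (σ : ↥F ≃ₐ[ℚ] ↥F) => fun i => q i σ)
    -- the conjugacy classes
    (c : ↥E ≃ₐ[ℚ] ↥E) (ci : ∀ i, ↥(Fi i) ≃ₐ[ℚ] ↥(Fi i))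
    (hmeet : ∀ i (τ : ↥E ≃ₐ[ℚ] ↥E), IsConj c τ →
      ∃ x : ↥(Fi i) ≃ₐ[ℚ] ↥(Fi i), IsConj (ci i) x ∧ pE i x = τ) :
    Nat.card {σ : ↥F ≃ₐ[ℚ] ↥F // IsConj c (rE σ) ∧ ∀ i, ¬ IsConj (ci i) (q i σ)}
      ≤ Set.ncard {x : ↥E ≃ₐ[ℚ] ↥E | IsConj c x} * ∏ i, (Nat.card (pE i).ker - 1) := by
  have := E.finite_algEquiv_rat
  have := fun i => (Fi i).finite_algEquiv_rat
  have restrict_comp (i) (σ : F ≃ₐ[ℚ] F) : pE i (q i σ) = rE σ :=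
    DFunLike.coe_injective <| restrict_restrict (hle i) (hleF i) hEF (hq i σ) (hpE i _) (hrE σ)
  exact card_avoiding_le (fun i => q i) pE rE restrict_comp hinj
    {x | IsConj c x} (Set.toFinite _) (fun i => {x | IsConj (ci i) x}) hmeet

/-- (The counting estimate in Step 3 of the proof of the main theorem.)
Let `E ⊆ F₁, …, Fₙ` be finite Galois extensions of `ℚ` inside a fixed algebraic closure
`A`, with compositum `F`, the `Fᵢ` linearly disjoint over `E` (the restriction map
`Gal(F|ℚ) → ∏ᵢ Gal(Fᵢ|ℚ)` is injective with image the fiber product over `Gal(E|ℚ)`).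
Fix a conjugacy class `C` of `Gal(E|ℚ)` (the class of `c`) and for each `i` a conjugacy
class `Cᵢ` of `Gal(Fᵢ|ℚ)` (the class of `cᵢ`) restricting into `C` and meeting every
restriction fiber over `C`.  Then the number of `σ ∈ Gal(F|ℚ)` with `σ|_E ∈ C` but
`σ|_{Fᵢ} ∉ Cᵢ` for every `i` is at most `|C| · ∏ᵢ ([Fᵢ:E] − 1)`, where
`[Fᵢ:E] = |ker(Gal(Fᵢ|ℚ) → Gal(E|ℚ))|`. -/
theorem galois_counting_bound
    {A : Type*} [Field A] [Algebra ℚ A] [IsAlgClosure ℚ A]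
    {ι : Type*} [Fintype ι]
    (E F : IntermediateField ℚ A) (Fi : ι → IntermediateField ℚ A)
    (hle : ∀ i, E ≤ Fi i) (hleF : ∀ i, Fi i ≤ F) (hEF : E ≤ F)
    (hcomp : F = ⨆ i, Fi i)
    (hfdE : FiniteDimensional ℚ ↥E) (hfd : ∀ i, FiniteDimensional ℚ ↥(Fi i))
    (hfdF : FiniteDimensional ℚ ↥F)
    (hgalE : IsGalois ℚ ↥E) (hgal : ∀ i, IsGalois ℚ ↥(Fi i)) (hgalF : IsGalois ℚ ↥F)
    -- the restriction homomorphisms, characterized by compatibility with the inclusions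
    (pE : ∀ i, (↥(Fi i) ≃ₐ[ℚ] ↥(Fi i)) →* (↥E ≃ₐ[ℚ] ↥E))
    (hpE : ∀ i (σ : ↥(Fi i) ≃ₐ[ℚ] ↥(Fi i)) (x : ↥E),
      inclusion (hle i) (pE i σ x) = σ (inclusion (hle i) x))
    (q : ∀ i, (↥F ≃ₐ[ℚ] ↥F) →* (↥(Fi i) ≃ₐ[ℚ] ↥(Fi i)))
    (hq : ∀ i (σ : ↥F ≃ₐ[ℚ] ↥F) (x : ↥(Fi i)),
      inclusion (hleF i) (q i σ x) = σ (inclusion (hleF i) x))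
    (rE : (↥F ≃ₐ[ℚ] ↥F) →* (↥E ≃ₐ[ℚ] ↥E))
    (hrE : ∀ (σ : ↥F ≃ₐ[ℚ] ↥F) (x : ↥E),
      inclusion hEF (rE σ x) = σ (inclusion hEF x))
    -- linear disjointness of the `Fᵢ` over `E`
    (hinj : Function.Injective fun (σ : ↥F ≃ₐ[ℚ] ↥F) => fun i => q i σ)
    (hdisj : ∀ τ : (i : ι) → (↥(Fi i) ≃ₐ[ℚ] ↥(Fi i)),
      (∀ i j, pE i (τ i) = pE j (τ j)) → ∃ σ : ↥F ≃ₐ[ℚ] ↥F, ∀ i, q i σ = τ i)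
    -- the conjugacy classes
    (c : ↥E ≃ₐ[ℚ] ↥E) (ci : ∀ i, ↥(Fi i) ≃ₐ[ℚ] ↥(Fi i))
    (hmap : ∀ i (x : ↥(Fi i) ≃ₐ[ℚ] ↥(Fi i)), IsConj (ci i) x → IsConj c (pE i x))
    (hmeet : ∀ i (τ : ↥E ≃ₐ[ℚ] ↥E), IsConj c τ →
      ∃ x : ↥(Fi i) ≃ₐ[ℚ] ↥(Fi i), IsConj (ci i) x ∧ pE i x = τ) :
    Nat.card {σ : ↥F ≃ₐ[ℚ] ↥F // IsConj c (rE σ) ∧ ∀ i, ¬ IsConj (ci i) (q i σ)}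
      ≤ Set.ncard {x : ↥E ≃ₐ[ℚ] ↥E | IsConj c x} * ∏ i, (Nat.card (pE i).ker - 1) :=
  galois_counting_bound_general E F Fi hle hleF hEF hfdE hfd pE hpE q hq rE hrE hinj c ci hmeet
end

section
/- Let G be an adjoint semisimple group over a field K with separable closure K^s, let T be a maximal K-torus of G, and let g, g' ∈ G(K^s) be strongly regular semisimple elements contained in T(K^s) and T'(K^s) respectively, where T' is another maximal K-torus. Suppose b ∈ G(K^s) satisfies b g' b⁻¹ = g. Then θ_b ∘ φ_{T',g'} = φ_{T,g}, where φ_{T,g} : Gal_K → GL(X*(T_{K^s})) is the twisted Galois action defined by σ·χ = σ(χ) ∘ inn(a_σ) for any a_σ ∈ G(K^s) with σ(g) = a_σ g a_σ⁻¹. -/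
/-!
For `σ ∈ Γ`, both `σ(b) · a'_σ` and `a_σ · b` conjugate `g'` to `σ(g)`, so the quotient
`(a_σ b)⁻¹ σ(b) a'_σ` centralizes `g'` and therefore lies in `T'`. As `T'` is commutative, the
two elements then induce the same conjugation on `T'`, which is the pointwise identity
`θ_b ∘ φ_{T',g'}(σ) = φ_{T,g}(σ) ∘ θ_b` after applying `σ⁻¹`.
-/

section ConjugationInGroup

variable {G : Type*} [Group G]

theorem conj_inv_mul_eq_self_of_conj_eq {x y g : G} (h : x * g * x⁻¹ = y * g * y⁻¹) :
    (y⁻¹ * x) * g * (y⁻¹ * x)⁻¹ = g := by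
  calc (y⁻¹ * x) * g * (y⁻¹ * x)⁻¹ = y⁻¹ * (x * g * x⁻¹) * y := by group
    _ = g := by rw [h]; group

theorem conj_eq_conj_of_commute_inv_mul {x y t : G} (h : Commute (y⁻¹ * x) t) :
    x * t * x⁻¹ = y * t * y⁻¹ := by
  calc x * t * x⁻¹ = y * ((y⁻¹ * x) * t) * x⁻¹ := by group
    _ = y * t * y⁻¹ := by rw [h.eq]; group

end ConjugationInGroup

section ConjugationUnderAction

variable {Γ G : Type*} [Group Γ] [Group G] [MulDistribMulAction Γ G]

theorem smul_conj (σ : Γ) (x y : G) :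
    σ • (x * y * x⁻¹) = (σ • x) * (σ • y) * (σ • x)⁻¹ := by
  rw [smul_mul', smul_mul', smul_inv']

theorem conj_inv_smul (σ : Γ) (b z : G) :
    b * (σ⁻¹ • z) * b⁻¹ = σ⁻¹ • ((σ • b) * z * (σ • b)⁻¹) := by
  rw [smul_conj, inv_smul_smul]

end ConjugationUnderAction

theorem twisted_galois_action_commutes_with_conjugation_general
    {Γ Gs U : Type*} [Group Γ] [Group Gs] [CommGroup U]
    [MulDistribMulAction Γ Gs] [MulDistribMulAction Γ U]
    (T T' : Subgroup Gs) (g g' : Gs)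
    (hcomm' : ∀ x ∈ T', ∀ y ∈ T', x * y = y * x)
    (hZ' : ∀ c : Gs, c * g' * c⁻¹ = g' ↔ c ∈ T')
    (hTstab : ∀ (σ : Γ) (t : Gs), t ∈ T → σ • t ∈ T)
    (hT'stab : ∀ (σ : Γ) (t : Gs), t ∈ T' → σ • t ∈ T')
    (a a' : Γ → Gs)
    (ha : ∀ σ : Γ, σ • g = a σ * g * (a σ)⁻¹)
    (hN : ∀ (σ : Γ) (t : Gs), t ∈ T → a σ * t * (a σ)⁻¹ ∈ T)
    (ha' : ∀ σ : Γ, σ • g' = a' σ * g' * (a' σ)⁻¹)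
    (hN' : ∀ (σ : Γ) (t : Gs), t ∈ T' → a' σ * t * (a' σ)⁻¹ ∈ T')
    (b : Gs) (hbg : b * g' * b⁻¹ = g)
    (hbT : ∀ t ∈ T', b * t * b⁻¹ ∈ T) :
    ∀ (σ : Γ) (χ : ↥T →* U) (t' : ↥T'),
      σ • χ ⟨b * (σ⁻¹ • (a' σ * (t' : Gs) * (a' σ)⁻¹)) * b⁻¹,
              hbT _ (hT'stab σ⁻¹ _ (hN' σ _ t'.2))⟩
        = σ • χ ⟨σ⁻¹ • (a σ * (b * (t' : Gs) * b⁻¹) * (a σ)⁻¹),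
                 hTstab σ⁻¹ _ (hN σ _ (hbT _ t'.2))⟩ := by
  intro σ χ t'
  have hx : (σ • b * a' σ) * g' * (σ • b * a' σ)⁻¹ = σ • g := by
    rw [← hbg, smul_conj, ha']
    group
  have hy : (a σ * b) * g' * (a σ * b)⁻¹ = σ • g := by
    rw [ha, ← hbg]
    group
  have hT' : (a σ * b)⁻¹ * (σ • b * a' σ) ∈ T' :=
    (hZ' _).mp (conj_inv_mul_eq_self_of_conj_eq (hx.trans hy.symm))
  have hconj := conj_eq_conj_of_commute_inv_mul (hcomm' _ hT' _ t'.2)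
  have key : b * (σ⁻¹ • (a' σ * (t' : Gs) * (a' σ)⁻¹)) * b⁻¹
      = σ⁻¹ • (a σ * (b * (t' : Gs) * b⁻¹) * (a σ)⁻¹) := by
    calc _ = σ⁻¹ • ((σ • b * a' σ) * t' * (σ • b * a' σ)⁻¹) := by rw [conj_inv_smul]; group
      _ = _ := by rw [hconj]; group
  exact congrArg (fun t => σ • χ t) (Subtype.ext key)

/-- (Lemma 2.7 of the paper.)  Let `G` be adjoint semisimple over `K`, `T, T'` maximal
`K`-tori, and `g ∈ T(K^s)`, `g' ∈ T'(K^s)` strongly regular elements with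
`b g' b⁻¹ = g` for some `b ∈ G(K^s)`.  Then `θ_b ∘ φ_{T',g'} = φ_{T,g}`.

Formalized abstractly: `Γ = Gal_K` acts on `Gs = G(K^s)` and on `U = (K^s)ˣ`; strong
regularity (for adjoint `G`) is encoded by the centralizer identities `Z_{Gs}(g) = T`
and `Z_{Gs}(g') = T'`; `a σ` (resp. `a' σ`) is a choice of `a_σ ∈ N_G(T)(K^s)` with
`σ(g) = a_σ g a_σ⁻¹` defining `φ_{T,g}` (resp. `φ_{T',g'}`); characters of `T` are
homomorphisms `↥T →* U`, `(σ·χ)(t) = σ • χ(σ⁻¹ • t)`, and the conclusion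
`θ_b ∘ φ_{T',g'} = φ_{T,g}` is stated pointwise:
`(φ_{T',g'}(σ)(χ ∘ inn b))(t') = (φ_{T,g}(σ)(χ))(b t' b⁻¹)`. -/
theorem twisted_galois_action_commutes_with_conjugation
    {Γ Gs U : Type*} [Group Γ] [Group Gs] [CommGroup U]
    [MulDistribMulAction Γ Gs] [MulDistribMulAction Γ U]
    (T T' : Subgroup Gs) (g g' : Gs)
    (hcomm : ∀ x ∈ T, ∀ y ∈ T, x * y = y * x)
    (hcomm' : ∀ x ∈ T', ∀ y ∈ T', x * y = y * x)
    (hZ : ∀ c : Gs, c * g * c⁻¹ = g ↔ c ∈ T)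
    (hZ' : ∀ c : Gs, c * g' * c⁻¹ = g' ↔ c ∈ T')
    (hTstab : ∀ (σ : Γ) (t : Gs), t ∈ T → σ • t ∈ T)
    (hT'stab : ∀ (σ : Γ) (t : Gs), t ∈ T' → σ • t ∈ T')
    (a a' : Γ → Gs)
    (ha : ∀ σ : Γ, σ • g = a σ * g * (a σ)⁻¹)
    (hN : ∀ (σ : Γ) (t : Gs), t ∈ T → a σ * t * (a σ)⁻¹ ∈ T)
    (ha' : ∀ σ : Γ, σ • g' = a' σ * g' * (a' σ)⁻¹)
    (hN' : ∀ (σ : Γ) (t : Gs), t ∈ T' → a' σ * t * (a' σ)⁻¹ ∈ T')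
    (b : Gs) (hbg : b * g' * b⁻¹ = g)
    (hbT : ∀ t ∈ T', b * t * b⁻¹ ∈ T) :
    ∀ (σ : Γ) (χ : ↥T →* U) (t' : ↥T'),
      σ • χ ⟨b * (σ⁻¹ • (a' σ * (t' : Gs) * (a' σ)⁻¹)) * b⁻¹,
              hbT _ (hT'stab σ⁻¹ _ (hN' σ _ t'.2))⟩
        = σ • χ ⟨σ⁻¹ • (a σ * (b * (t' : Gs) * b⁻¹) * (a σ)⁻¹),
                 hTstab σ⁻¹ _ (hN σ _ (hbT _ t'.2))⟩ :=
  twisted_galois_action_commutes_with_conjugation_general T T' g g' hcomm' hZ' hTstab hT'stab a a'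
    ha hN ha' hN' b hbg hbT
end
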